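/- arXiv:2601.12965 — 4 statements merged into one kernel-verified Lean document; each statement's English description precedes it below -/
import Mathlib

section
/- For any 0 < a < b < ∞ and s ∈ ℝ, the limit as z → ∞ of z·e^{z/b²}·Φ_a^b(s,z) equals b^{-2(s-1)}. -/
/-!
With `c = 1/b²` and `d = 1/a²`, the quantity `z e^{zc} Φ_a^b(s,z)` is the integral of `u^(s-1)`
against the kernel `z e^{-z(u-c)}` on `[c, d]`. This kernel has mass `1 - e^{-z(d-c)} → 1` and
tends to zero uniformly away from `c`, so it is a family of peak functions at `c`; integrated
against a function continuous at `c` it converges to the value at `c`, here `c^(s-1) = b^(-2(s-1))`.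
-/

open MeasureTheory Real Filter

/-- `Φ a b s z = ∫_{1/b²}^{1/a²} u^(s-1) e^{-z u} du`. -/
noncomputable def Phi (a b s z : ℝ) : ℝ :=
  ∫ u in (1 / b ^ 2)..(1 / a ^ 2), u ^ (s - 1) * Real.exp (-z * u)

open Set Topology

section PeakAtLeftEndpoint

variable {c d : ℝ}

theorem integral_Icc_mul_exp_neg_mul_sub (hcd : c ≤ d) (z : ℝ) :
    ∫ u in Icc c d, z * exp (-(z * (u - c))) = 1 - exp (-(z * (d - c))) := by
  have hderiv : ∀ u ∈ uIcc c d,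
      HasDerivAt (fun u => -exp (-(z * (u - c)))) (z * exp (-(z * (u - c)))) u := fun u _ =>
    (((hasDerivAt_id u).sub_const c).const_mul z).fun_neg.exp.fun_neg.congr_deriv
      (by simp only [id, mul_one]; ring)
  rw [integral_Icc_eq_integral_Ioc, ← intervalIntegral.integral_of_le hcd,
    intervalIntegral.integral_eq_sub_of_hasDerivAt hderiv
      (Continuous.intervalIntegrable (by fun_prop) c d)]
  simp only [sub_self, mul_zero, neg_zero, exp_zero]
  ring

theorem tendstoUniformlyOn_mul_exp_neg_mul_sub {δ : ℝ} (hδ : 0 < δ) :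
    TendstoUniformlyOn (fun z u => z * exp (-(z * (u - c)))) 0 atTop (Ici (c + δ)) := by
  have hlim : Tendsto (fun z => z * exp (-δ * z)) atTop (𝓝 0) := by
    simpa using tendsto_rpow_mul_exp_neg_mul_atTop_nhds_zero 1 δ hδ
  rw [Metric.tendstoUniformlyOn_iff]
  intro ε hε
  filter_upwards [hlim.eventually (gt_mem_nhds hε), eventually_ge_atTop 0] with z hzε hz u hu
  have hu : δ ≤ u - c := by linarith [mem_Ici.1 hu]
  calc dist 0 (z * exp (-(z * (u - c)))) = z * exp (-(z * (u - c))) := by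
        rw [dist_zero_left, norm_of_nonneg (by positivity)]
    _ ≤ z * exp (-δ * z) := by gcongr; nlinarith
    _ < ε := hzε

theorem tendsto_setIntegral_mul_exp_neg_mul_sub_smul {E : Type*} [NormedAddCommGroup E]
    [NormedSpace ℝ E] [CompleteSpace E] {f : ℝ → E} (hcd : c < d)
    (hf : IntegrableOn f (Icc c d)) (hfc : ContinuousWithinAt f (Icc c d) c) :
    Tendsto (fun z => ∫ u in Icc c d, (z * exp (-(z * (u - c)))) • f u) atTop (𝓝 (f c)) := by
  refine tendsto_setIntegral_peak_smul_of_integrableOn_of_tendsto measurableSet_Icc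
    measurableSet_Icc subset_rfl self_mem_nhdsWithin measure_Icc_lt_top.ne ?nonneg ?uniform ?mass
    (.of_forall fun z => (by fun_prop : Continuous _).aestronglyMeasurable) hf hfc
  case nonneg => filter_upwards [eventually_ge_atTop 0] with z hz u _ using by positivity
  case uniform =>
    intro U hU hcU
    obtain ⟨δ, hδ, hball⟩ := Metric.isOpen_iff.1 hU c hcU
    refine (tendstoUniformlyOn_mul_exp_neg_mul_sub hδ).mono ?_
    rintro u ⟨⟨hcu, -⟩, huU⟩
    have hfar : ¬ dist u c < δ := fun h => huU (hball h)
    rw [Real.dist_eq, abs_of_nonneg (sub_nonneg.2 hcu)] at hfar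
    exact mem_Ici.2 (by linarith)
  case mass =>
    simp_rw [integral_Icc_mul_exp_neg_mul_sub hcd.le]
    have := tendsto_exp_neg_atTop_nhds_zero.comp (tendsto_id.atTop_mul_const (sub_pos.2 hcd))
    simpa using tendsto_const_nhds.sub this

theorem mul_exp_mul_mul_intervalIntegral_eq_setIntegral (hcd : c ≤ d) (g : ℝ → ℝ) (z : ℝ) :
    z * exp (z * c) * ∫ u in c..d, g u * exp (-z * u) =
      ∫ u in Icc c d, (z * exp (-(z * (u - c)))) • g u := by
  rw [intervalIntegral.integral_of_le hcd, ← integral_Icc_eq_integral_Ioc, ← integral_const_mul]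
  congr 1 with u
  rw [smul_eq_mul, show -(z * (u - c)) = z * c + -z * u by ring, exp_add]
  ring

end PeakAtLeftEndpoint

/-- For `0 < a < b` and `s ∈ ℝ`, `z e^{z/b²} Φ_a^b(s,z) → b^{-2(s-1)}` as `z → ∞`. -/
theorem phi_asymptotic (a b s : ℝ) (ha : 0 < a) (hab : a < b) :
    Tendsto (fun z : ℝ => z * Real.exp (z / b ^ 2) * Phi a b s z) atTop
      (nhds (b ^ (-(2 : ℝ) * (s - 1)))) := by
  have hb : 0 < b := ha.trans hab
  have hc : 0 < 1 / b ^ 2 := by positivity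
  have hcd : 1 / b ^ 2 < 1 / a ^ 2 :=
    one_div_lt_one_div_of_lt (by positivity) (pow_lt_pow_left₀ hab ha.le two_ne_zero)
  have hcont : ContinuousOn (fun u : ℝ => u ^ (s - 1)) (Icc (1 / b ^ 2) (1 / a ^ 2)) :=
    continuousOn_id.rpow_const fun u hu => Or.inl (hc.trans_le hu.1).ne'
  have hlim := tendsto_setIntegral_mul_exp_neg_mul_sub_smul hcd hcont.integrableOn_Icc
    (hcont _ (left_mem_Icc.2 hcd.le))
  rw [rpow_mul hb.le, rpow_neg hb.le, rpow_two, ← one_div]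
  refine hlim.congr fun z => ?_
  rw [Phi, ← mul_exp_mul_mul_intervalIntegral_eq_setIntegral hcd.le, mul_one_div]
end

section
/- For any 0 < b < ∞, s > 0, and k > 0, the limit as a → 0⁺ of a^{2s}·Φ_a^b(s, k·a²) equals k^{-s} · ∫_0^k t^{s-1} e^{-t} dt, and this limit is finite. -/
/-!
The substitution `t = k a² u` gives `a^{2s} Φ_a^b(s, k a²) = k^{-s} ∫_{k a²/b²}^k t^{s-1} e^{-t} dt`
exactly, so only the lower limit moves, and it tends to `0`; since `s > 0` the integrand is
integrable near `0`, so the integral is continuous in that limit.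
-/

open MeasureTheory Real Filter

theorem integral_rpow_mul_exp_neg_mul {x y c : ℝ} (s : ℝ) (hx : 0 ≤ x) (hy : 0 ≤ y) (hc : 0 < c) :
    ∫ u in x..y, u ^ (s - 1) * exp (-c * u)
      = c ^ (-s) * ∫ t in c * x..c * y, t ^ (s - 1) * exp (-t) := by
  have h_integrand : ∀ u ∈ Set.uIcc x y,
      u ^ (s - 1) * exp (-c * u) = c ^ (1 - s) * ((c * u) ^ (s - 1) * exp (-(c * u))) := by
    intro u hu
    have hu : 0 ≤ u := (le_min hx hy).trans hu.1
    rw [mul_rpow hc.le hu, ← mul_assoc, ← mul_assoc, ← rpow_add hc, neg_mul]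
    simp
  rw [intervalIntegral.integral_congr h_integrand, intervalIntegral.integral_const_mul,
    intervalIntegral.integral_comp_mul_left (fun t => t ^ (s - 1) * exp (-t)) hc.ne', smul_eq_mul,
    ← mul_assoc, ← rpow_neg_one, ← rpow_add hc]
  ring_nf

theorem Phi_eq_rpow_mul_integral (a b s : ℝ) {z : ℝ} (hz : 0 < z) :
    Phi a b s z = z ^ (-s) * ∫ t in z / b ^ 2..z / a ^ 2, t ^ (s - 1) * exp (-t) := by
  rw [Phi, integral_rpow_mul_exp_neg_mul s (by positivity) (by positivity) hz, mul_one_div,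
    mul_one_div]

theorem rpow_mul_Phi_mul_sq (b s : ℝ) {a k : ℝ} (ha : 0 < a) (hk : 0 < k) :
    a ^ (2 * s) * Phi a b s (k * a ^ 2)
      = k ^ (-s) * ∫ t in k * a ^ 2 / b ^ 2..k, t ^ (s - 1) * exp (-t) := by
  have hscale : a ^ (2 * s) * (k * a ^ 2) ^ (-s) = k ^ (-s) := by
    rw [mul_rpow hk.le (by positivity), ← rpow_natCast, ← rpow_mul ha.le, mul_left_comm,
      ← rpow_add ha]
    simp
  rw [Phi_eq_rpow_mul_integral a b s (by positivity), ← mul_assoc, hscale,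
    mul_div_cancel_right₀ k (by positivity)]

theorem continuous_integral_rpow_mul_exp_neg_lower {s : ℝ} (hs : 0 < s) (k : ℝ) :
    Continuous fun x => ∫ t in x..k, t ^ (s - 1) * exp (-t) := by
  have h_int : ∀ x y : ℝ, IntervalIntegrable (fun t => t ^ (s - 1) * exp (-t)) volume x y :=
    fun x y => (intervalIntegral.intervalIntegrable_rpow' (by linarith)).mul_continuousOn
      (by fun_prop)
  simp_rw [intervalIntegral.integral_symm k]
  exact (intervalIntegral.continuous_primitive h_int k).neg

theorem phi_limit_ka_general (b s k : ℝ) (hs : 0 < s) (hk : 0 < k) :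
    Tendsto (fun a : ℝ => a ^ (2 * s) * Phi a b s (k * a ^ 2))
      (nhdsWithin 0 (Set.Ioi 0))
      (nhds (k ^ (-s) * ∫ t in (0 : ℝ)..k, t ^ (s - 1) * Real.exp (-t))) := by
  have h_lower : Tendsto (fun a : ℝ => k * a ^ 2 / b ^ 2) (nhdsWithin 0 (Set.Ioi 0)) (nhds 0) := by
    have h : Continuous fun a : ℝ => k * a ^ 2 / b ^ 2 := by fun_prop
    simpa using h.tendsto 0 |>.mono_left nhdsWithin_le_nhds
  have h_lim := ((continuous_integral_rpow_mul_exp_neg_lower hs k).tendsto 0).comp h_lower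
  refine (h_lim.const_mul (k ^ (-s))).congr' ?_
  filter_upwards [self_mem_nhdsWithin] with a (ha : 0 < a)
  exact (rpow_mul_Phi_mul_sq b s ha hk).symm

/-- For `0 < b`, `s > 0`, `k > 0`,
`a^{2s} Φ_a^b(s, k a²) → k^{-s} ∫_0^k t^{s-1} e^{-t} dt` as `a → 0⁺`. -/
theorem phi_limit_ka (b s k : ℝ) (hb : 0 < b) (hs : 0 < s) (hk : 0 < k) :
    Tendsto (fun a : ℝ => a ^ (2 * s) * Phi a b s (k * a ^ 2))
      (nhdsWithin 0 (Set.Ioi 0))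
      (nhds (k ^ (-s) * ∫ t in (0 : ℝ)..k, t ^ (s - 1) * Real.exp (-t))) :=
  phi_limit_ka_general b s k hs hk
end

section
/- Let μ be a compactly supported probability measure on ℝ^d, 0 < a < b < ∞, and s₁, s₂ ∈ ℝ. Then the ratio L_a^b(s₁,x) / L_a^b(s₂,x) converges uniformly to b^{2(s₂−s₁)} as |x| → ∞; i.e., lim_{R→∞} sup_{|x|≥R} | L_a^b(s₁,x)/L_a^b(s₂,x) − b^{2(s₂−s₁)} | = 0. -/
/-!
For large `z` the weight `exp (-z u)` concentrates `Φ_a^b(s, z)` at the left endpoint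
`u = 1 / b²` (Laplace's method): near the endpoint `u ^ (s₁ - s₂)` is close to
`(1 / b²) ^ (s₁ - s₂) = b ^ (2 (s₂ - s₁))`, and the rest of the interval carries an
exponentially smaller share of the mass. Hence
`|Φ(s₁, z) - b ^ (2 (s₂ - s₁)) Φ(s₂, z)| ≤ ε Φ(s₂, z)` for all large `z`. Since `μ` lives on a
bounded set, `|x - x̃|² / 2` is uniformly large on its support once `|x|` is large, and
integrating the pointwise bound against `μ` gives the same relative bound for `L(s₁, x)` and
`L(s₂, x)`.
-/

open MeasureTheory Real Filter

/-- `L_a^b(s,x) := ∫ Φ_a^b(s, |x-x̃|²/2) dμ(x̃)`. -/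
noncomputable def Lab (d : ℕ) (μ : Measure (EuclideanSpace ℝ (Fin d)))
    (a b s : ℝ) (x : EuclideanSpace ℝ (Fin d)) : ℝ :=
  ∫ xt, Phi a b s (‖x - xt‖ ^ 2 / 2) ∂μ

open Set

lemma abs_integral_sub_const_mul_le {X : Type*} [MeasurableSpace X] {μ : Measure X}
    {f₁ f₂ : X → ℝ} {c ε : ℝ} (hf₁ : Integrable f₁ μ) (hf₂ : Integrable f₂ μ)
    (h : ∀ᵐ y ∂μ, |f₁ y - c * f₂ y| ≤ ε * f₂ y) :
    |∫ y, f₁ y ∂μ - c * ∫ y, f₂ y ∂μ| ≤ ε * ∫ y, f₂ y ∂μ := by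
  rw [← integral_const_mul, ← integral_sub hf₁ (hf₂.const_mul c), ← integral_const_mul]
  exact abs_integral_le_integral_abs.trans
    (integral_mono_ae (hf₁.sub (hf₂.const_mul c)).abs (hf₂.const_mul ε) h)

lemma abs_div_sub_le_of_abs_sub_mul_le {A B c ε : ℝ} (hB : 0 < B) (h : |A - c * B| ≤ ε * B) :
    |A / B - c| ≤ ε := by
  rwa [← mul_div_cancel_right₀ c hB.ne', ← sub_div, abs_div, abs_of_pos hB, div_le_iff₀ hB]

lemma Bornology.IsBounded.eventually_forall_mem_norm_sub {E : Type*} [SeminormedAddCommGroup E]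
    {K : Set E} (hK : Bornology.IsBounded K) {P : ℝ → Prop} (hP : ∀ᶠ r in atTop, P r) :
    ∀ᶠ x in Bornology.cobounded E, ∀ y ∈ K, P ‖x - y‖ := by
  obtain ⟨R, hR⟩ := hK.exists_norm_le
  obtain ⟨r₀, hr₀⟩ := eventually_atTop.1 hP
  rw [← comap_norm_atTop]
  filter_upwards [tendsto_comap.eventually (eventually_ge_atTop (r₀ + R))] with x hx y hy
  exact hr₀ _ (by linarith [norm_sub_norm_le x y, hR y hy])

section Laplace

variable {α β δ ε z C : ℝ} {g w : ℝ → ℝ}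

lemma mul_exp_le_integral_mul_exp {γ m : ℝ} (hαγ : α ≤ γ) (hγβ : γ ≤ β) (hz : 0 ≤ z)
    (hw : ContinuousOn w (Icc α β)) (hm₀ : 0 ≤ m) (hm : ∀ u ∈ Icc α β, m ≤ w u) :
    m * (γ - α) * exp (-z * γ) ≤ ∫ u in α..β, w u * exp (-z * u) := by
  have hwe : ContinuousOn (fun u => w u * exp (-z * u)) (Icc α β) := by fun_prop
  calc m * (γ - α) * exp (-z * γ) = ∫ _ in α..γ, m * exp (-z * γ) := by
        rw [intervalIntegral.integral_const, smul_eq_mul]; ring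
    _ ≤ ∫ u in α..γ, w u * exp (-z * u) := by
        refine intervalIntegral.integral_mono_on hαγ intervalIntegrable_const
          ((hwe.mono (Icc_subset_Icc_right hγβ)).intervalIntegrable_of_Icc hαγ)
          fun u hu => ?_
        exact mul_le_mul (hm u ⟨hu.1, hu.2.trans hγβ⟩) (exp_le_exp.2 (by nlinarith [hu.2]))
          (exp_pos _).le (hm₀.trans (hm u ⟨hu.1, hu.2.trans hγβ⟩))
    _ ≤ ∫ u in α..β, w u * exp (-z * u) := by
        refine intervalIntegral.integral_mono_interval le_rfl hαγ hγβ ?_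
          (hwe.intervalIntegrable_of_Icc (hαγ.trans hγβ))
        refine (ae_restrict_mem measurableSet_Ioc).mono fun u hu => ?_
        exact mul_nonneg (hm₀.trans (hm u (Ioc_subset_Icc_self hu))) (exp_pos _).le

lemma abs_integral_sub_mul_exp_le (hαβ : α ≤ β) (hz : 0 ≤ z) (hε : 0 ≤ ε)
    (hg : ContinuousOn g (Icc α β)) (hw : ContinuousOn w (Icc α β))
    (hw_nonneg : ∀ u ∈ Icc α β, 0 ≤ w u)
    (hgδ : ∀ u ∈ Icc α β, u < α + δ → |g u - g α| ≤ ε)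
    (hC : ∀ u ∈ Icc α β, |(g u - g α) * w u| ≤ C) :
    |∫ u in α..β, (g u - g α) * w u * exp (-z * u)|
      ≤ ε * (∫ u in α..β, w u * exp (-z * u)) + C * (β - α) * exp (-z * (α + δ)) := by
  have hpt : ∀ u ∈ Icc α β, |(g u - g α) * w u * exp (-z * u)|
      ≤ ε * (w u * exp (-z * u)) + C * exp (-z * (α + δ)) := by
    intro u hu
    have hC₀ : 0 ≤ C := (abs_nonneg _).trans (hC u hu)
    have hwe : 0 ≤ w u * exp (-z * u) := mul_nonneg (hw_nonneg u hu) (exp_pos _).le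
    rw [abs_mul, abs_of_pos (exp_pos _)]
    rcases lt_or_ge u (α + δ) with hnear | hfar
    · have : |(g u - g α) * w u| * exp (-z * u) ≤ ε * (w u * exp (-z * u)) := by
        rw [abs_mul, abs_of_nonneg (hw_nonneg u hu), mul_assoc]
        exact mul_le_mul_of_nonneg_right (hgδ u hu hnear) hwe
      nlinarith [exp_pos (-z * (α + δ))]
    · have : |(g u - g α) * w u| * exp (-z * u) ≤ C * exp (-z * (α + δ)) :=
        mul_le_mul (hC u hu) (exp_le_exp.2 (by nlinarith)) (exp_pos _).le hC₀
      nlinarith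
  have hint : ContinuousOn (fun u => (g u - g α) * w u * exp (-z * u)) (Icc α β) := by fun_prop
  calc |∫ u in α..β, (g u - g α) * w u * exp (-z * u)|
      ≤ ∫ u in α..β, |(g u - g α) * w u * exp (-z * u)| :=
        intervalIntegral.abs_integral_le_integral_abs hαβ
    _ ≤ ∫ u in α..β, (ε * (w u * exp (-z * u)) + C * exp (-z * (α + δ))) := by
        refine intervalIntegral.integral_mono_on hαβ (hint.abs.intervalIntegrable_of_Icc hαβ)
          (ContinuousOn.intervalIntegrable_of_Icc hαβ (by fun_prop)) hpt
    _ = ε * (∫ u in α..β, w u * exp (-z * u)) + C * (β - α) * exp (-z * (α + δ)) := by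
        rw [intervalIntegral.integral_add, intervalIntegral.integral_const_mul,
          intervalIntegral.integral_const, smul_eq_mul]
        · ring
        · exact ((ContinuousOn.intervalIntegrable_of_Icc hαβ (by fun_prop))).const_mul ε
        · exact intervalIntegrable_const

theorem eventually_abs_integral_sub_mul_exp_le (hαβ : α < β) (hg : ContinuousOn g (Icc α β))
    (hw : ContinuousOn w (Icc α β)) (hw_pos : ∀ u ∈ Icc α β, 0 < w u) (hε : 0 < ε) :
    ∀ᶠ z in atTop, |∫ u in α..β, (g u - g α) * w u * exp (-z * u)|
      ≤ ε * ∫ u in α..β, w u * exp (-z * u) := by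
  have hα : α ∈ Icc α β := left_mem_Icc.2 hαβ.le
  obtain ⟨δ, hδ, hgδ⟩ := Metric.continuousWithinAt_iff.1 (hg α hα) (ε / 2) (half_pos hε)
  set η := min δ (β - α)
  have hη : 0 < η := lt_min hδ (sub_pos.2 hαβ)
  have hgη : ∀ u ∈ Icc α β, u < α + η → |g u - g α| ≤ ε / 2 := fun u hu hu' =>
    (hgδ hu (by
      rw [dist_eq, abs_of_nonneg (by linarith [hu.1])]
      linarith [min_le_left δ (β - α)])).le
  obtain ⟨u₀, hu₀, hmin⟩ := isCompact_Icc.exists_isMinOn (nonempty_Icc.2 hαβ.le) hw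
  obtain ⟨C, hC⟩ :=
    isCompact_Icc.exists_bound_of_continuousOn ((hg.sub continuousOn_const).mul hw)
  set m := w u₀
  have hm : 0 < m := hw_pos u₀ hu₀
  -- the tail beyond `α + η` is exponentially smaller than the mass on `[α, α + η / 2]`
  have hdecay :
      ∀ᶠ z in atTop, C * (β - α) * exp (-(z * (η / 2))) ≤ ε / 2 * (m * (η / 2)) := by
    have : Tendsto (fun z => C * (β - α) * exp (-(z * (η / 2)))) atTop (nhds 0) := by
      simpa using (tendsto_exp_neg_atTop_nhds_zero.comp
        (tendsto_id.atTop_mul_const (half_pos hη))).const_mul (C * (β - α))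
    exact this.eventually (ge_mem_nhds (by positivity))
  filter_upwards [hdecay, eventually_ge_atTop 0] with z hz hz₀
  have hlow := mul_exp_le_integral_mul_exp (γ := α + η / 2) (by linarith)
    (by linarith [min_le_right δ (β - α)]) hz₀ hw hm.le hmin
  have hup := abs_integral_sub_mul_exp_le hαβ.le hz₀ (half_pos hε).le hg hw
    (fun u hu => (hw_pos u hu).le) hgη (fun u hu => by simpa using hC u hu)
  rw [add_sub_cancel_left] at hlow
  have htail : C * (β - α) * exp (-z * (α + η))
      ≤ ε / 2 * (m * (η / 2) * exp (-z * (α + η / 2))) := by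
    calc C * (β - α) * exp (-z * (α + η))
        = C * (β - α) * exp (-(z * (η / 2))) * exp (-z * (α + η / 2)) := by
          rw [mul_assoc _ (exp _), ← exp_add]; ring_nf
      _ ≤ ε / 2 * (m * (η / 2)) * exp (-z * (α + η / 2)) :=
          mul_le_mul_of_nonneg_right hz (exp_pos _).le
      _ = ε / 2 * (m * (η / 2) * exp (-z * (α + η / 2))) := by ring
  nlinarith

end Laplace

section Phi

variable {a b : ℝ}

lemma continuousOn_rpow_const_Icc {α β : ℝ} (hα : 0 < α) (p : ℝ) :
    ContinuousOn (fun u : ℝ => u ^ p) (Icc α β) :=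
  continuousOn_id.rpow_const fun _ hu => Or.inl (hα.trans_le hu.1).ne'

lemma continuousOn_rpow_mul_exp {α β : ℝ} (hα : 0 < α) (p z : ℝ) :
    ContinuousOn (fun u : ℝ => u ^ p * exp (-z * u)) (Icc α β) :=
  (continuousOn_rpow_const_Icc hα p).mul (by fun_prop)

lemma one_div_sq_lt_one_div_sq (ha : 0 < a) (hab : a < b) : 1 / b ^ 2 < 1 / a ^ 2 :=
  one_div_lt_one_div_of_lt (by positivity) (pow_lt_pow_left₀ hab ha.le two_ne_zero)

lemma Phi_pos (ha : 0 < a) (hab : a < b) (s z : ℝ) : 0 < Phi a b s z := by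
  have hb : 0 < 1 / b ^ 2 := one_div_pos.2 (pow_pos (ha.trans hab) 2)
  refine intervalIntegral.intervalIntegral_pos_of_pos_on
    ((continuousOn_rpow_mul_exp hb _ z).intervalIntegrable_of_Icc
      (one_div_sq_lt_one_div_sq ha hab).le) (fun u hu => ?_) (one_div_sq_lt_one_div_sq ha hab)
  exact mul_pos (rpow_pos_of_pos (hb.trans hu.1) _) (exp_pos _)

lemma Phi_antitone (ha : 0 < a) (hab : a < b) (s : ℝ) : Antitone (Phi a b s) := by
  intro z₁ z₂ hz
  have hb : 0 < 1 / b ^ 2 := one_div_pos.2 (pow_pos (ha.trans hab) 2)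
  have hab' := (one_div_sq_lt_one_div_sq ha hab).le
  refine intervalIntegral.integral_mono_on hab'
    ((continuousOn_rpow_mul_exp hb _ z₂).intervalIntegrable_of_Icc hab')
    ((continuousOn_rpow_mul_exp hb _ z₁).intervalIntegrable_of_Icc hab') fun u hu => ?_
  have hu : 0 < u := hb.trans_le hu.1
  exact mul_le_mul_of_nonneg_left (exp_le_exp.2 (by nlinarith)) (rpow_nonneg hu.le _)

lemma one_div_sq_rpow_sub (hb : 0 < b) (s₁ s₂ : ℝ) :
    (1 / b ^ 2) ^ (s₁ - s₂) = b ^ (2 * (s₂ - s₁)) := by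
  rw [one_div, ← rpow_natCast, ← rpow_neg hb.le, ← rpow_mul hb.le]
  norm_num; ring_nf

theorem eventually_abs_Phi_sub_mul_le (ha : 0 < a) (hab : a < b) (s₁ s₂ : ℝ) {ε : ℝ}
    (hε : 0 < ε) : ∀ᶠ z in atTop,
      |Phi a b s₁ z - b ^ (2 * (s₂ - s₁)) * Phi a b s₂ z| ≤ ε * Phi a b s₂ z := by
  have hb : 0 < 1 / b ^ 2 := one_div_pos.2 (pow_pos (ha.trans hab) 2)
  have hab' := one_div_sq_lt_one_div_sq ha hab
  have hsub : ∀ z, Phi a b s₁ z - b ^ (2 * (s₂ - s₁)) * Phi a b s₂ z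
      = ∫ u in (1 / b ^ 2)..(1 / a ^ 2),
          (u ^ (s₁ - s₂) - (1 / b ^ 2) ^ (s₁ - s₂)) * u ^ (s₂ - 1) * exp (-z * u) := by
    intro z
    rw [Phi, Phi, ← intervalIntegral.integral_const_mul, ← intervalIntegral.integral_sub
      ((continuousOn_rpow_mul_exp hb _ z).intervalIntegrable_of_Icc hab'.le)
      (((continuousOn_rpow_mul_exp hb _ z).intervalIntegrable_of_Icc hab'.le).const_mul _)]
    refine intervalIntegral.integral_congr fun u hu => ?_
    have hu : 0 < u := hb.trans_le (uIcc_of_le hab'.le ▸ hu).1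
    simp only [one_div_sq_rpow_sub (ha.trans hab), sub_mul, mul_assoc, ← rpow_add hu]
    ring_nf
  filter_upwards [eventually_abs_integral_sub_mul_exp_le hab'
    (continuousOn_rpow_const_Icc hb _) (continuousOn_rpow_const_Icc hb _)
    (fun u hu => rpow_pos_of_pos (hb.trans_le hu.1) _) hε] with z hz
  rwa [hsub]

end Phi

section Lab

variable {d : ℕ} {μ : Measure (EuclideanSpace ℝ (Fin d))} {a b : ℝ}

lemma integrable_Phi_norm_sub_sq [IsFiniteMeasure μ] (ha : 0 < a) (hab : a < b) (s : ℝ)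
    (x : EuclideanSpace ℝ (Fin d)) : Integrable (fun y => Phi a b s (‖x - y‖ ^ 2 / 2)) μ := by
  refine .of_bound ((Phi_antitone ha hab s).measurable.comp (by fun_prop)).aestronglyMeasurable
    (Phi a b s 0) (ae_of_all _ fun y => ?_)
  rw [norm_of_nonneg (Phi_pos ha hab s _).le]
  exact Phi_antitone ha hab s (by positivity)

lemma Lab_pos [IsFiniteMeasure μ] [NeZero μ] (ha : 0 < a) (hab : a < b) (s : ℝ)
    (x : EuclideanSpace ℝ (Fin d)) : 0 < Lab d μ a b s x := by
  rw [Lab, integral_pos_iff_support_of_nonneg (fun y => (Phi_pos ha hab s _).le)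
    (integrable_Phi_norm_sub_sq ha hab s x)]
  simp [Function.support, (Phi_pos ha hab s _).ne', NeZero.ne μ]

end Lab

/-- For a compactly supported probability measure `μ`, `L_a^b(s₁,x)/L_a^b(s₂,x)`
converges uniformly to `b^{2(s₂-s₁)}` as `|x| → ∞`. -/
theorem L_ratio_uniform_limit (d : ℕ) (a b s₁ s₂ : ℝ) (ha : 0 < a) (hab : a < b)
    (μ : Measure (EuclideanSpace ℝ (Fin d))) [IsProbabilityMeasure μ]
    (hμ : ∃ K : Set (EuclideanSpace ℝ (Fin d)), IsCompact K ∧ μ Kᶜ = 0) :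
    ∀ ε > 0, ∃ R : ℝ, ∀ x : EuclideanSpace ℝ (Fin d), R ≤ ‖x‖ →
      |Lab d μ a b s₁ x / Lab d μ a b s₂ x - b ^ (2 * (s₂ - s₁))| < ε := by
  intro ε hε
  obtain ⟨K, hK, hKμ⟩ := hμ
  have hK_ae : ∀ᵐ y ∂μ, y ∈ K := mem_ae_iff.2 hKμ
  have hfar := hK.isBounded.eventually_forall_mem_norm_sub
    (((tendsto_pow_atTop two_ne_zero).atTop_div_const two_pos).eventually
      (eventually_abs_Phi_sub_mul_le ha hab s₁ s₂ (half_pos hε)))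
  rw [← comap_norm_atTop] at hfar
  obtain ⟨R, -, hR⟩ := (atTop_basis.comap norm).eventually_iff.1 hfar
  refine ⟨R, fun x hx => ?_⟩
  have hclose := abs_integral_sub_const_mul_le (integrable_Phi_norm_sub_sq ha hab s₁ x)
    (integrable_Phi_norm_sub_sq ha hab s₂ x) (hK_ae.mono fun y hy => hR hx y hy)
  exact (abs_div_sub_le_of_abs_sub_mul_le (Lab_pos ha hab s₂ x) hclose).trans_lt
    (half_lt_self hε)
end

section
/- Let μ_train be the uniform distribution on a finite set 𝒳 = {x₁,…,x_N} ⊂ ℝ^d, let α > −d, 0 < σ_T < ∞, and fix 0 < k < √(2(d+α+2)/(3(d+α))). Then for each i there exists δ > 0 (depending on d, α, σ_T, k, 𝒳) such that whenever 0 < σ_ε < δ, the function L(x) := (1/N) Σ_j Φ_{σ_ε}^{σ_T}((d+α)/2 − 1, |x−x_j|²/2) is strictly concave on the open ball { x : |x − x_i| < k σ_ε }. -/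
/-!
Write `m = (d + α)/2` and `q_j = |x - x_j|²/2`. Along a line `x + t v` the term
`Φ(m - 1, q_j)` has second derivative `Φ(m + 1, q_j) ⟪x - x_j, v⟫² - Φ(m, q_j) |v|²`, which by
Cauchy–Schwarz is at most `|v|² (2 q_j Φ(m + 1, q_j) - Φ(m, q_j))`; so it suffices that these
weights have negative sum on the ball. For data points equal to `x_i` we have
`q_j ≤ k²σ_ε²/2`, and `e^{-t}(1 - 2t) ≥ 1 - 3t` bounds the weight by
`σ_T^{-2m}/m - (1/m - 3k²/(2(m + 1))) σ_ε^{-2m}`, which tends to `-∞` exactly because of the bound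
on `k`. For the other data points `q_j` stays bounded away from `0`, and comparing with the full
Gamma integral bounds their weights uniformly in `σ_ε`.
-/

open MeasureTheory Real Filter

open scoped RealInnerProductSpace Topology

lemma one_sub_three_mul_le_exp_neg_mul {t : ℝ} (ht : 0 ≤ t) :
    1 - 3 * t ≤ exp (-t) * (1 - 2 * t) := by
  have h1 := add_one_le_exp (-t)
  have h2 : exp (-t) ≤ 1 := exp_le_one_iff.mpr (by linarith)
  rcases le_total (2 * t) 1 with h | h <;> nlinarith

lemma continuousOn_rpow_mul_exp_mul (r w : ℝ) :
    ContinuousOn (fun u : ℝ => u ^ r * exp (w * u)) (Set.Ioi 0) :=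
  (continuousOn_id.rpow_const fun u hu => Or.inl (ne_of_gt hu)).mul (by fun_prop)

lemma intervalIntegrable_rpow_mul_exp_mul {c A : ℝ} (hc : 0 < c) (hA : 0 < A) (r w : ℝ) :
    IntervalIntegrable (fun u : ℝ => u ^ r * exp (w * u)) volume c A :=
  ((continuousOn_rpow_mul_exp_mul r w).mono
    fun _ hu => lt_of_lt_of_le (lt_min hc hA) hu.1).intervalIntegrable

section Phi

variable {a b : ℝ}

lemma Phi_nonneg (ha : 0 < a) (hab : a ≤ b) (s z : ℝ) : 0 ≤ Phi a b s z := by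
  refine intervalIntegral.integral_nonneg
    (one_div_le_one_div_of_le (by positivity) (by gcongr)) fun u hu => ?_
  have hb : 0 < b := ha.trans_le hab
  have : 0 < u := lt_of_lt_of_le (by positivity) hu.1
  positivity

lemma hasDerivAt_Phi (ha : a ≠ 0) (hb : b ≠ 0) (s z : ℝ) :
    HasDerivAt (Phi a b s) (-Phi a b (s + 1) z) z := by
  have hc : 0 < 1 / b ^ 2 := by positivity
  have hA : 0 < 1 / a ^ 2 := by positivity
  have hpos : ∀ u ∈ Set.uIoc (1 / b ^ 2) (1 / a ^ 2), 0 < u :=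
    fun u hu => lt_of_le_of_lt (le_min hc.le hA.le) hu.1
  have key := intervalIntegral.hasDerivAt_integral_of_dominated_loc_of_deriv_le
    (F := fun x u => u ^ (s - 1) * exp (-x * u)) (F' := fun x u => -(u ^ s * exp (-x * u)))
    (bound := fun u => u ^ s * exp ((|z| + 1) * u)) (Metric.ball_mem_nhds z one_pos)
    (Eventually.of_forall fun x => ((continuousOn_rpow_mul_exp_mul (s - 1) (-x)).mono
      hpos).aestronglyMeasurable measurableSet_uIoc)
    (intervalIntegrable_rpow_mul_exp_mul hc hA (s - 1) (-z))
    (((continuousOn_rpow_mul_exp_mul s (-z)).mono hpos).neg.aestronglyMeasurable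
      measurableSet_uIoc)
    (Eventually.of_forall fun u hu x hx => ?_)
    (intervalIntegrable_rpow_mul_exp_mul hc hA s _)
    (Eventually.of_forall fun u hu x _ => ?_)
  · exact key.2.congr_deriv (by simp [Phi, intervalIntegral.integral_neg])
  · have hu0 := hpos u hu
    have hx : -x ≤ |z| + 1 := by
      have := abs_sub_abs_le_abs_sub x z
      rw [Metric.mem_ball, dist_eq_norm, norm_eq_abs] at hx
      linarith [neg_le_abs x]
    rw [norm_neg, norm_of_nonneg (by positivity)]
    gcongr
  · have hu0 := hpos u hu
    refine (((hasDerivAt_id x).neg.mul_const u).exp.const_mul (u ^ (s - 1))).congr_deriv ?_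
    rw [rpow_sub_one hu0.ne']
    field_simp
    simp

lemma Phi_le_rpow_mul_Gamma {s z : ℝ} (hs : 0 < s) (hz : 0 < z) :
    Phi a b s z ≤ (1 / z) ^ s * Gamma s := by
  have hf : ∀ u ∈ Set.Ioi (0 : ℝ), 0 ≤ u ^ (s - 1) * exp (-z * u) := fun u hu => by
    have : 0 < u := hu
    positivity
  have hGamma : ∫ u in Set.Ioi 0, u ^ (s - 1) * exp (-z * u) = (1 / z) ^ s * Gamma s := by
    simpa [neg_mul] using integral_rpow_mul_exp_neg_mul_Ioi hs hz
  have hint : IntegrableOn (fun u => u ^ (s - 1) * exp (-z * u)) (Set.Ioi 0) :=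
    Integrable.of_integral_ne_zero (by rw [hGamma]; positivity)
  have hsub : ∀ {c : ℝ}, 0 ≤ c → ∀ A, Set.Ioc c A ⊆ Set.Ioi 0 := fun hc _ _ hu =>
    lt_of_le_of_lt hc hu.1
  rw [← hGamma, Phi]
  rcases le_total (1 / b ^ 2) (1 / a ^ 2) with h | h
  · rw [intervalIntegral.integral_of_le h]
    exact setIntegral_mono_set hint (ae_restrict_of_forall_mem measurableSet_Ioi hf)
      (hsub (by positivity) _).eventuallyLE
  · rw [intervalIntegral.integral_of_ge h]
    have := setIntegral_nonneg (μ := volume) measurableSet_Ioc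
      fun u hu => hf u (hsub (c := 1 / a ^ 2) (by positivity) (1 / b ^ 2) hu)
    linarith [setIntegral_nonneg (μ := volume) measurableSet_Ioi hf]

lemma two_mul_Phi_sub_Phi_le_of_le {m k z : ℝ} (ha : 0 < a) (hab : a ≤ b) (hm : 0 < m)
    (hz : 0 ≤ z) (hzk : z ≤ (k * a) ^ 2 / 2) :
    2 * z * Phi a b (m + 1) z - Phi a b m z
      ≤ (1 / b ^ 2) ^ m / m - (1 / m - 3 * k ^ 2 / (2 * (m + 1))) * (1 / a ^ 2) ^ m := by
  set c := 1 / b ^ 2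
  set A := 1 / a ^ 2
  have hc : 0 < c := by have := ha.trans_le hab; positivity
  have hA : 0 < A := by positivity
  have hcA : c ≤ A := one_div_le_one_div_of_le (by positivity) (by gcongr)
  have hzA : z * A ≤ k ^ 2 / 2 := by
    calc z * A ≤ (k * a) ^ 2 / 2 * A := by gcongr
      _ = k ^ 2 / 2 := by simp only [A]; field_simp
  have hint := intervalIntegrable_rpow_mul_exp_mul hc hA
  have hpoint : ∀ u ∈ Set.Icc c A,
      2 * z * (u ^ m * exp (-z * u)) - u ^ (m - 1) * exp (-z * u) ≤ 3 * z * u ^ m - u ^ (m - 1) := by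
    intro u hu
    have hu0 : 0 < u := hc.trans_le hu.1
    have hexp := one_sub_three_mul_le_exp_neg_mul (mul_nonneg hz hu0.le)
    have hum : u ^ m = u ^ (m - 1) * u := by rw [rpow_sub_one hu0.ne']; field_simp
    rw [hum, neg_mul]
    nlinarith [mul_le_mul_of_nonneg_left hexp (rpow_nonneg hu0.le (m - 1))]
  have hpow : ∀ r : ℝ, -1 < r → IntervalIntegrable (fun u : ℝ => u ^ r) volume c A :=
    fun _ => intervalIntegral.intervalIntegrable_rpow'
  calc 2 * z * Phi a b (m + 1) z - Phi a b m z
      = ∫ u in c..A, 2 * z * (u ^ m * exp (-z * u)) - u ^ (m - 1) * exp (-z * u) := by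
        rw [intervalIntegral.integral_sub ((hint m (-z)).const_mul _) (hint (m - 1) (-z)),
          intervalIntegral.integral_const_mul]
        simp [Phi, c, A]
    _ ≤ ∫ u in c..A, 3 * z * u ^ m - u ^ (m - 1) :=
        intervalIntegral.integral_mono_on hcA (((hint m (-z)).const_mul _).sub (hint (m - 1) (-z)))
          (((hpow m (by linarith)).const_mul _).sub (hpow (m - 1) (by linarith))) hpoint
    _ = 3 * z * ((A ^ (m + 1) - c ^ (m + 1)) / (m + 1)) - (A ^ m - c ^ m) / m := by
        rw [intervalIntegral.integral_sub ((hpow m (by linarith)).const_mul _)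
          (hpow (m - 1) (by linarith)), intervalIntegral.integral_const_mul,
          integral_rpow (Or.inl (by linarith)), integral_rpow (Or.inl (by linarith))]
        simp
    _ ≤ c ^ m / m - (1 / m - 3 * k ^ 2 / (2 * (m + 1))) * A ^ m := by
        have hAm : A ^ (m + 1) = A ^ m * A := rpow_add_one hA.ne' m
        have hc1 : 0 ≤ z * c ^ (m + 1) := by positivity
        have hzAm : z * (A ^ m * A) ≤ k ^ 2 / 2 * A ^ m := by
          nlinarith [rpow_nonneg hA.le m]
        rw [hAm]
        field_simp
        nlinarith

lemma two_mul_Phi_sub_Phi_le_of_ge {m z₀ z : ℝ} (ha : 0 < a) (hab : a ≤ b) (hm : 0 < m)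
    (hz₀ : 0 < z₀) (hz : z₀ ≤ z) :
    2 * z * Phi a b (m + 1) z - Phi a b m z ≤ 2 * Gamma (m + 1) * (1 / z₀) ^ m := by
  have hz0 : 0 < z := hz₀.trans_le hz
  have hGamma : Phi a b (m + 1) z ≤ _ := Phi_le_rpow_mul_Gamma (by linarith) hz0
  calc 2 * z * Phi a b (m + 1) z - Phi a b m z
      ≤ 2 * z * ((1 / z) ^ (m + 1) * Gamma (m + 1)) := by
        nlinarith [Phi_nonneg ha hab m z]
    _ = 2 * Gamma (m + 1) * (1 / z) ^ m := by
        rw [rpow_add_one (by positivity)]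
        field_simp
    _ ≤ 2 * Gamma (m + 1) * (1 / z₀) ^ m := by gcongr

end Phi

lemma one_div_sub_pos_of_lt_sqrt {m k : ℝ} (hm : 0 < m) (hk0 : 0 ≤ k)
    (hk : k < √(2 * (m + 1) / (3 * m))) : 0 < 1 / m - 3 * k ^ 2 / (2 * (m + 1)) := by
  have hk2 := (lt_sqrt hk0).mp hk
  rw [lt_div_iff₀ (by positivity)] at hk2
  rw [sub_pos, div_lt_div_iff₀ (by positivity) (by positivity)]
  nlinarith

lemma strictConcaveOn_of_hasDerivAt2_neg {D : Set ℝ} (hD : Convex ℝ D) {g g' g'' : ℝ → ℝ}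
    (hg : ∀ t, HasDerivAt g (g' t) t) (hg' : ∀ t, HasDerivAt g' (g'' t) t)
    (hneg : ∀ t ∈ interior D, g'' t < 0) : StrictConcaveOn ℝ D g := by
  have hd : deriv g = g' := funext fun t => (hg t).deriv
  refine strictConcaveOn_of_deriv2_neg hD (fun t _ => (hg t).continuousAt.continuousWithinAt)
    fun t ht => ?_
  rw [Function.iterate_succ_apply', Function.iterate_one, hd, (hg' t).deriv]
  exact hneg t ht

lemma strictConcaveOn_of_forall_segment {E : Type*} [AddCommGroup E] [Module ℝ E] {S : Set E}
    {f : E → ℝ} (hS : Convex ℝ S)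
    (h : ∀ x ∈ S, ∀ y ∈ S, x ≠ y →
      StrictConcaveOn ℝ (Set.Icc 0 1) fun t : ℝ => f (x + t • (y - x))) :
    StrictConcaveOn ℝ S f := by
  refine ⟨hS, fun x hx y hy hxy a b ha hb hab => ?_⟩
  have := (h x hx y hy hxy).2 (Set.left_mem_Icc.2 zero_le_one) (Set.right_mem_Icc.2 zero_le_one)
    zero_ne_one ha hb hab
  obtain rfl : a = 1 - b := by linarith
  have hseg : x + b • (y - x) = (1 - b) • x + b • y := by module
  simpa [hseg] using this

lemma exists_pos_forall_le_dist_of_ne {α ι : Type*} [MetricSpace α] [Finite ι] (X : ι → α)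
    (x : α) : ∃ r > 0, ∀ j, X j ≠ x → r ≤ dist (X j) x := by
  obtain ⟨r, hr, hball⟩ := Metric.isOpen_iff.mp
    ((Set.finite_range X).sdiff (t := {x})).isClosed.isOpen_compl x (by simp)
  exact ⟨r, hr, fun j hj => not_lt.mp fun hlt => hball (Metric.mem_ball.mpr hlt) ⟨⟨j, rfl⟩, hj⟩⟩

lemma tendsto_one_div_sq_rpow_nhdsGT_zero {m : ℝ} (hm : 0 < m) :
    Tendsto (fun σ : ℝ => (1 / σ ^ 2) ^ m) (𝓝[>] 0) atTop := by
  refine (tendsto_rpow_neg_nhdsGT_zero (by linarith : -(2 * m) < 0)).congr' ?_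
  filter_upwards [self_mem_nhdsWithin] with σ (hσ : 0 < σ)
  rw [one_div, ← rpow_natCast, ← rpow_neg hσ.le, ← rpow_mul hσ.le]
  norm_num

section Radial

variable {E : Type*} [NormedAddCommGroup E] [InnerProductSpace ℝ E]

lemma hasDerivAt_comp_half_norm_sq_add_smul {F G : ℝ → ℝ} (hF : ∀ z, HasDerivAt F (-G z) z)
    (p v : E) (t : ℝ) :
    HasDerivAt (fun t : ℝ => F (‖p + t • v‖ ^ 2 / 2))
      (-G (‖p + t • v‖ ^ 2 / 2) * ⟪p + t • v, v⟫) t := by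
  have hq : HasDerivAt (fun t : ℝ => ‖p + t • v‖ ^ 2 / 2) ⟪p + t • v, v⟫ t := by
    simpa using (((hasDerivAt_id t).smul_const v).const_add p).norm_sq.div_const 2
  exact (hF _).comp t hq

lemma hasDerivAt_neg_comp_half_norm_sq_add_smul_mul_inner {G H : ℝ → ℝ}
    (hG : ∀ z, HasDerivAt G (-H z) z) (p v : E) (t : ℝ) :
    HasDerivAt (fun t : ℝ => -G (‖p + t • v‖ ^ 2 / 2) * ⟪p + t • v, v⟫)
      (H (‖p + t • v‖ ^ 2 / 2) * ⟪p + t • v, v⟫ ^ 2 - G (‖p + t • v‖ ^ 2 / 2) * ‖v‖ ^ 2) t := by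
  have hinner : HasDerivAt (fun t : ℝ => ⟪p + t • v, v⟫) (‖v‖ ^ 2) t := by
    simp only [inner_add_left, real_inner_smul_left, real_inner_self_eq_norm_sq]
    simpa using ((hasDerivAt_id t).mul_const (‖v‖ ^ 2)).const_add ⟪p, v⟫
  exact ((hasDerivAt_comp_half_norm_sq_add_smul hG p v t).neg.mul hinner).congr_deriv
    (by simp only [Pi.neg_apply]; ring)

theorem strictConcaveOn_const_mul_sum_comp_half_norm_sq {ι : Type*} (s : Finset ι) (X : ι → E)
    {F G H : ℝ → ℝ} (hF : ∀ z, HasDerivAt F (-G z) z) (hG : ∀ z, HasDerivAt G (-H z) z)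
    (hH : ∀ z, 0 ≤ H z) {S : Set E} (hS : Convex ℝ S) {c : ℝ} (hc : 0 < c)
    (hneg : ∀ p ∈ S, ∑ j ∈ s,
      (2 * (‖p - X j‖ ^ 2 / 2) * H (‖p - X j‖ ^ 2 / 2) - G (‖p - X j‖ ^ 2 / 2)) < 0) :
    StrictConcaveOn ℝ S fun x => c * ∑ j ∈ s, F (‖x - X j‖ ^ 2 / 2) := by
  refine strictConcaveOn_of_forall_segment hS fun x hx y hy hxy => ?_
  set v := y - x with hv_def
  have hv : 0 < ‖v‖ ^ 2 := by have : v ≠ 0 := sub_ne_zero.mpr hxy.symm; positivity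
  have hshift : ∀ (t : ℝ) j, x + t • v - X j = (x - X j) + t • v := fun _ _ => by abel
  simp only [hshift]
  refine strictConcaveOn_of_hasDerivAt2_neg (convex_Icc 0 1)
    (fun t => (HasDerivAt.fun_sum fun j _ =>
      hasDerivAt_comp_half_norm_sq_add_smul hF (x - X j) v t).const_mul c)
    (fun t => (HasDerivAt.fun_sum fun j _ =>
      hasDerivAt_neg_comp_half_norm_sq_add_smul_mul_inner hG (x - X j) v t).const_mul c)
    fun t ht => ?_
  rw [interior_Icc] at ht
  have hpt := hneg _ (hS.add_smul_sub_mem hx hy (Set.Ioo_subset_Icc_self ht))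
  simp only [← hv_def, hshift] at hpt
  have hCS : ∀ w : E, ∀ g h : ℝ, 0 ≤ h →
      h * ⟪w, v⟫ ^ 2 - g * ‖v‖ ^ 2 ≤ ‖v‖ ^ 2 * (2 * (‖w‖ ^ 2 / 2) * h - g) := by
    intro w g h hh
    have : ⟪w, v⟫ ^ 2 ≤ (‖w‖ * ‖v‖) ^ 2 := by
      rw [← sq_abs]; exact pow_le_pow_left₀ (abs_nonneg _) (abs_real_inner_le_norm w v) 2
    nlinarith [mul_le_mul_of_nonneg_left this hh]
  calc c * ∑ j ∈ s, (H (‖x - X j + t • v‖ ^ 2 / 2) * ⟪x - X j + t • v, v⟫ ^ 2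
          - G (‖x - X j + t • v‖ ^ 2 / 2) * ‖v‖ ^ 2)
      ≤ c * (‖v‖ ^ 2 * ∑ j ∈ s, (2 * (‖x - X j + t • v‖ ^ 2 / 2) * H (‖x - X j + t • v‖ ^ 2 / 2)
          - G (‖x - X j + t • v‖ ^ 2 / 2))) := by
        refine mul_le_mul_of_nonneg_left ?_ hc.le
        rw [Finset.mul_sum]
        exact Finset.sum_le_sum fun j _ => hCS _ _ _ (hH _)
    _ < 0 := mul_neg_of_pos_of_neg hc (mul_neg_of_pos_of_neg hv hpt)

theorem strictConcaveOn_ball_const_mul_sum_Phi {ι : Type*} [Fintype ι] (X : ι → E) (i : ι)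
    {m k r σ σT c : ℝ} (hm : 0 < m) (hσ : 0 < σ) (hσT : σ ≤ σT) (hr : 0 < r) (hsep : ∀ j, X j ≠ X i → r ≤ dist (X j) (X i))
    (hkσ : k * σ ≤ r / 2)
    (hbig : (1 / σT ^ 2) ^ m / m + Fintype.card ι * (2 * Gamma (m + 1) * (8 / r ^ 2) ^ m)
      < (1 / m - 3 * k ^ 2 / (2 * (m + 1))) * (1 / σ ^ 2) ^ m) (hc : 0 < c) :
    StrictConcaveOn ℝ (Metric.ball (X i) (k * σ))
      fun x => c * ∑ j, Phi σ σT (m - 1) (‖x - X j‖ ^ 2 / 2) := by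
  have hσT' : σT ≠ 0 := (hσ.trans_le hσT).ne'
  refine strictConcaveOn_const_mul_sum_comp_half_norm_sq Finset.univ X
    (fun z => by simpa using hasDerivAt_Phi hσ.ne' hσT' (m - 1) z)
    (hasDerivAt_Phi hσ.ne' hσT' m) (Phi_nonneg hσ hσT (m + 1)) (convex_ball _ _) hc
    fun p hp => ?_
  rw [Metric.mem_ball] at hp
  set B := (1 / σT ^ 2) ^ m / m - (1 / m - 3 * k ^ 2 / (2 * (m + 1))) * (1 / σ ^ 2) ^ m
  set M := 2 * Gamma (m + 1) * (8 / r ^ 2) ^ m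
  set T := fun j => 2 * (‖p - X j‖ ^ 2 / 2) * Phi σ σT (m + 1) (‖p - X j‖ ^ 2 / 2)
    - Phi σ σT m (‖p - X j‖ ^ 2 / 2)
  have hM : 0 ≤ M := by positivity
  have hB : B + Fintype.card ι * M < 0 := by simp only [B]; linarith
  have hnear : ∀ j, X j = X i → T j ≤ B := fun j hj => by
    refine two_mul_Phi_sub_Phi_le_of_le hσ hσT hm (by positivity) ?_
    rw [← dist_eq_norm, hj]
    gcongr
  have hfar : ∀ j, X j ≠ X i → T j ≤ M := fun j hj => by
    have hdist : r / 2 ≤ ‖p - X j‖ := by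
      rw [← dist_eq_norm, dist_comm]
      linarith [hsep j hj, dist_triangle_right (X j) (X i) p, dist_comm (X i) p]
    refine (two_mul_Phi_sub_Phi_le_of_ge hσ hσT hm (by positivity : 0 < r ^ 2 / 8) ?_).trans_eq
      (by rw [one_div_div])
    nlinarith
  have hT : ∀ j, T j ≤ M := fun j => by
    by_cases hj : X j = X i
    · linarith [hnear j hj, mul_nonneg (Nat.cast_nonneg (Fintype.card ι) : (0 : ℝ) ≤ _) hM]
    · exact hfar j hj
  change ∑ j, T j < 0
  classical
  rw [← Finset.add_sum_erase _ _ (Finset.mem_univ i)]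
  have herase : ∑ j ∈ Finset.univ.erase i, T j ≤ Fintype.card ι * M := by
    refine (Finset.sum_le_card_nsmul _ _ _ fun j _ => hT j).trans ?_
    rw [nsmul_eq_mul]
    gcongr
    exact_mod_cast Finset.card_erase_le
  linarith [hnear i rfl]

end Radial

theorem strict_concavity_near_data_general (d N : ℕ) (α σT k : ℝ)
    (hα : -((d : ℝ)) < α)
    (hk0 : 0 < k) (hk : k < Real.sqrt (2 * ((d : ℝ) + α + 2) / (3 * ((d : ℝ) + α))))
    (X : Fin N → EuclideanSpace ℝ (Fin d)) :
    ∀ i : Fin N, ∃ δ > 0, ∀ σε : ℝ, 0 < σε → σε < δ → σε < σT →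
      StrictConcaveOn ℝ (Metric.ball (X i) (k * σε))
        (fun x : EuclideanSpace ℝ (Fin d) =>
          (1 / (N : ℝ)) * ∑ j : Fin N,
            Phi σε σT (((d : ℝ) + α) / 2 - 1) (‖x - X j‖ ^ 2 / 2)) := by
  intro i
  set m : ℝ := ((d : ℝ) + α) / 2
  have hm : 0 < m := by simp only [m]; linarith
  have hη := one_div_sub_pos_of_lt_sqrt hm hk0.le
    (by convert hk using 2; simp only [m]; field_simp)
  obtain ⟨r, hr, hsep⟩ := exists_pos_forall_le_dist_of_ne X (X i)
  have hsmall : ∀ᶠ σ in 𝓝[>] 0, k * σ < r / 2 ∧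
      (1 / σT ^ 2) ^ m / m + N * (2 * Gamma (m + 1) * (8 / r ^ 2) ^ m)
        < (1 / m - 3 * k ^ 2 / (2 * (m + 1))) * (1 / σ ^ 2) ^ m :=
    (((continuous_const_mul k).tendsto' 0 0 (mul_zero k)).mono_left nhdsWithin_le_nhds
      |>.eventually (eventually_lt_nhds (half_pos hr))).and
    (((tendsto_one_div_sq_rpow_nhdsGT_zero hm).const_mul_atTop hη).eventually_gt_atTop _)
  obtain ⟨δ, hδ, hδσ⟩ := (nhdsGT_basis 0).eventually_iff.mp hsmall
  refine ⟨δ, hδ, fun σ hσ hσδ hσT => ?_⟩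
  obtain ⟨hkσ, hbig⟩ := hδσ ⟨hσ, hσδ⟩
  have hN : (0 : ℝ) < N := by exact_mod_cast i.pos
  exact strictConcaveOn_ball_const_mul_sum_Phi X i hm hσ hσT.le hr hsep hkσ.le
    (by simpa using hbig) (by positivity)

/-- Strict concavity near training points: for the empirical objective
`L(x) = (1/N) Σ_j Φ_{σε}^{σT}((d+α)/2-1, |x-x_j|²/2)`, for each `i` there is `δ > 0` such
that for `0 < σε < δ`, `L` is strictly concave on the ball `{|x - x_i| < k σε}`. -/
theorem strict_concavity_near_data (d N : ℕ) (hN : 0 < N) (α σT k : ℝ)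
    (hα : -((d : ℝ)) < α) (hσT : 0 < σT)
    (hk0 : 0 < k) (hk : k < Real.sqrt (2 * ((d : ℝ) + α + 2) / (3 * ((d : ℝ) + α))))
    (X : Fin N → EuclideanSpace ℝ (Fin d)) :
    ∀ i : Fin N, ∃ δ > 0, ∀ σε : ℝ, 0 < σε → σε < δ → σε < σT →
      StrictConcaveOn ℝ (Metric.ball (X i) (k * σε))
        (fun x : EuclideanSpace ℝ (Fin d) =>
          (1 / (N : ℝ)) * ∑ j : Fin N,
            Phi σε σT (((d : ℝ) + α) / 2 - 1) (‖x - X j‖ ^ 2 / 2)) :=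
  strict_concavity_near_data_general d N α σT k hα hk0 hk X
end
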